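/- arXiv:2103.15139 — 3 statements merged into one kernel-verified Lean document; each statement's English description precedes it below -/
import Mathlib

section
/- Let P be a poset. Then P is a quasicontinuous poset if and only if the complete lattice Γ(P) of Scott closed subsets of P (ordered by inclusion) is a quasicontinuous lattice. -/
open Topology TopologicalSpace Set

/-- A poset is quasicontinuous if for every point `x` and every Scott open set `U` containing
`x` there is a nonempty finite set `F` with `x ∈ int_σ(↑F) ⊆ ↑F ⊆ U`. -/
def QuasicontinuousPoset (α : Type*) [Preorder α] : Prop :=
  ∀ (x : α) (U : Set α), IsOpen[Topology.scott α Set.univ] U → x ∈ U →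
    ∃ F : Set α, F.Finite ∧ F.Nonempty ∧
      x ∈ @interior α (Topology.scott α Set.univ) ↑(upperClosure F) ∧
      (↑(upperClosure F) : Set α) ⊆ U

/-!
If `Γ(P)` is quasicontinuous and `x ∈ U` with `U` Scott open, apply quasicontinuity at `↓x` to
the Scott open set `◇U` of closed sets meeting `U`, and pick a point of `U` in each member of the
finite family obtained; since `y ↦ ↓y` is Scott continuous, these points witness quasicontinuity
of `P` at `x`.

Conversely, a Scott open `𝒰 ∋ A` in `Γ(P)` already contains `cl G` for some finite `G ⊆ A`.
For every choice of finite sets `F_g` with `g ∈ int ↑F_g` (`g ∈ G`), the closures of the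
transversals of `(F_g)` form a finite family whose upper set contains the open set
`⋂_g ◇ int ↑F_g ∋ A`. These families are directed in the Smyth order, and a closed set lying above
a member of each of them contains `G`; by Rudin's lemma one of them therefore lies in `𝒰`.
-/

section Rudin

variable {ι X : Type*} [Preorder X]

def IsRudinSelection (F : ι → Set X) (E : Set (ι × X)) : Prop :=
  (∀ p ∈ E, p.2 ∈ F p.1) ∧ (∀ i, ∃ x, (i, x) ∈ E) ∧
    ∀ i j, upperClosure (F i) ≤ upperClosure (F j) → ∀ y, (j, y) ∈ E → ∃ x, (i, x) ∈ E ∧ x ≤ y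

variable {F : ι → Set X}

lemma isRudinSelection_setOf_mem (hne : ∀ i, (F i).Nonempty) :
    IsRudinSelection F {p | p.2 ∈ F p.1} :=
  ⟨fun _ hp => hp, hne, fun _ _ hij _ hy => le_upperClosure.1 hij hy⟩

lemma IsRudinSelection.sInter (hfin : ∀ i, (F i).Finite) {c : Set (Set (ι × X))}
    (hc : IsChain (· ⊆ ·) c) (hcne : c.Nonempty) (h : ∀ E ∈ c, IsRudinSelection F E) :
    IsRudinSelection F (⋂₀ c) := by
  -- in each coordinate the sections of the chain are finitely many, so one of them is least
  have least : ∀ i, ∃ E ∈ c, ∀ x, (i, x) ∈ E → (i, x) ∈ ⋂₀ c := by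
    intro i
    have hsec : (fun E => Prod.mk i ⁻¹' E) '' c ⊆ 𝒫 F i := by
      rintro _ ⟨E, hE, rfl⟩ x hx
      exact (h E hE).1 _ hx
    obtain ⟨_, ⟨E, hE, rfl⟩, hmin⟩ :=
      ((hfin i).finite_subsets.subset hsec).exists_minimal (hcne.image _)
    refine ⟨E, hE, fun x hx E' hE' => ?_⟩
    rcases hc.total hE hE' with hEE' | hE'E
    · exact hEE' hx
    · exact hmin ⟨E', hE', rfl⟩ (fun y hy => hE'E hy) hx
  obtain ⟨E₀, hE₀⟩ := hcne
  refine ⟨fun p hp => (h E₀ hE₀).1 p (hp E₀ hE₀), fun i => ?_, fun i j hij y hy => ?_⟩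
  · obtain ⟨E, hE, hleast⟩ := least i
    obtain ⟨x, hx⟩ := (h E hE).2.1 i
    exact ⟨x, hleast x hx⟩
  · obtain ⟨E, hE, hleast⟩ := least i
    obtain ⟨x, hx, hxy⟩ := (h E hE).2.2 i j hij y (hy E hE)
    exact ⟨x, hleast x hx, hxy⟩

/-- The points of `M` lying below a point of `T` already form a selection. -/
lemma IsRudinSelection.exists_le_of_minimal {M T : Set (ι × X)}
    (hM : Minimal (IsRudinSelection F) M) (hTM : T ⊆ M)
    (hT : ∀ j, ∃ p ∈ T, upperClosure (F j) ≤ upperClosure (F p.1)) {i : ι} {x : X}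
    (hx : (i, x) ∈ M) : ∃ p ∈ T, upperClosure (F i) ≤ upperClosure (F p.1) ∧ x ≤ p.2 := by
  obtain ⟨hMF, -, hMcompat⟩ := hM.prop
  set E := {q ∈ M | ∃ p ∈ T, upperClosure (F q.1) ≤ upperClosure (F p.1) ∧ q.2 ≤ p.2}
  have hE : IsRudinSelection F E := by
    refine ⟨fun q hq => hMF q hq.1, fun j => ?_, fun j k hjk y ⟨hy, p, hpT, hkp, hyp⟩ => ?_⟩
    · obtain ⟨p, hpT, hjp⟩ := hT j
      obtain ⟨w, hw, hwp⟩ := hMcompat j p.1 hjp p.2 (hTM hpT)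
      exact ⟨w, hw, p, hpT, hjp, hwp⟩
    · obtain ⟨w, hw, hwy⟩ := hMcompat j k hjk y hy
      exact ⟨w, ⟨hw, p, hpT, hjk.trans hkp, hwy.trans hyp⟩, hwy⟩
  exact ((hM.le_of_le hE fun q hq => hq.1) hx).2

/-- Rudin's lemma. -/
theorem exists_directedOn_subset_iUnion_inter_nonempty (hfin : ∀ i, (F i).Finite)
    (hne : ∀ i, (F i).Nonempty) (hdir : Directed (· ≤ ·) fun i => upperClosure (F i)) :
    ∃ D ⊆ ⋃ i, F i, DirectedOn (· ≤ ·) D ∧ ∀ i, (D ∩ F i).Nonempty := by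
  obtain ⟨M, -, hM⟩ := zorn_superset_nonempty {E | IsRudinSelection F E}
    (fun c hcS hc hcne => ⟨⋂₀ c, IsRudinSelection.sInter hfin hc hcne hcS,
      fun _ => sInter_subset_of_mem⟩) _ (isRudinSelection_setOf_mem hne)
  obtain ⟨hMF, hMne, -⟩ := hM.prop
  have cofinal : ∀ i x, (i, x) ∈ M → ∀ k, ∃ p ∈ M,
      upperClosure (F k) ≤ upperClosure (F p.1) ∧ x ≤ p.2 := by
    intro i x hx k
    obtain ⟨p, ⟨hpM, hkp⟩, -, hxp⟩ := IsRudinSelection.exists_le_of_minimal hM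
      (T := {p ∈ M | upperClosure (F k) ≤ upperClosure (F p.1)}) (fun _ hp => hp.1)
      (fun j => by
        obtain ⟨l, hjl, hkl⟩ := hdir j k
        obtain ⟨z, hz⟩ := hMne l
        exact ⟨(l, z), ⟨hz, hkl⟩, hjl⟩) hx
    exact ⟨p, hpM, hkp, hxp⟩
  refine ⟨Prod.snd '' M, ?_, ?_, fun i => ?_⟩
  · rintro _ ⟨p, hp, rfl⟩
    exact mem_iUnion.2 ⟨p.1, hMF p hp⟩
  · rintro _ ⟨⟨i, x⟩, hx, rfl⟩ _ ⟨⟨j, y⟩, hy, rfl⟩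
    obtain ⟨p, ⟨hpM, hxp⟩, -, hyp⟩ := IsRudinSelection.exists_le_of_minimal hM
      (T := {p ∈ M | x ≤ p.2}) (fun _ hp => hp.1)
      (fun k => by
        obtain ⟨p, hpM, hkp, hxp⟩ := cofinal i x hx k
        exact ⟨p, ⟨hpM, hxp⟩, hkp⟩) hy
    exact ⟨p.2, mem_image_of_mem _ hpM, hxp, hyp⟩
  · obtain ⟨x, hx⟩ := hMne i
    exact ⟨x, mem_image_of_mem _ hx, hMF _ hx⟩

end Rudin

theorem Topology.IsScott.exists_upperClosure_subset_of_iInter_subset {L ι : Type*}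
    [CompleteLattice L] [TopologicalSpace L] [IsScott L univ] [Nonempty ι] {F : ι → Set L}
    (hfin : ∀ i, (F i).Finite) (hdir : Directed (· ≤ ·) fun i => upperClosure (F i))
    {U : Set L} (hU : IsOpen U) (hsub : ⋂ i, ↑(upperClosure (F i)) ⊆ U) :
    ∃ i, ↑(upperClosure (F i)) ⊆ U := by
  have hUup := isUpperSet_of_isOpen (D := univ) hU
  by_contra! hbad
  -- Rudin's lemma applied to the parts of the `F i` outside `U`
  have hne : ∀ i, (F i \ U).Nonempty := fun i =>
    sdiff_nonempty.2 fun hFU => hbad i (upperClosure_min hFU hUup)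
  have hdir' : Directed (· ≤ ·) fun i => upperClosure (F i \ U) := by
    intro i j
    obtain ⟨k, hik, hjk⟩ := hdir i j
    have hle : ∀ i, upperClosure (F i) ≤ upperClosure (F k) →
        upperClosure (F i \ U) ≤ upperClosure (F k \ U) := by
      refine fun i hik => le_upperClosure.2 fun y ⟨hyF, hyU⟩ => ?_
      obtain ⟨x, hxF, hxy⟩ := le_upperClosure.1 hik hyF
      exact ⟨x, ⟨hxF, fun hxU => hyU (hUup hxy hxU)⟩, hxy⟩
    exact ⟨k, hle i hik, hle j hjk⟩
  obtain ⟨D, hDsub, hDdir, hDmeet⟩ := exists_directedOn_subset_iUnion_inter_nonempty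
    (fun i => (hfin i).sdiff) hne hdir'
  have hsSup : sSup D ∈ U := hsub <| mem_iInter.2 fun i => by
    obtain ⟨d, hdD, hdF, -⟩ := hDmeet i
    exact ⟨d, hdF, le_sSup hdD⟩
  obtain ⟨d, hdD, hdU⟩ := (isOpen_iff_isUpperSet_and_dirSupInaccOn (D := univ)).1 hU |>.2
    (mem_univ D) ((hDmeet (Classical.arbitrary ι)).mono inter_subset_left) hDdir
    (isLUB_sSup D) hsSup
  obtain ⟨i, -, hdU'⟩ := mem_iUnion.1 (hDsub hdD)
  exact hdU' hdU

lemma quasicontinuousPoset_iff {α : Type*} [Preorder α] [TopologicalSpace α] [IsScott α univ] :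
    QuasicontinuousPoset α ↔ ∀ (x : α) (U : Set α), IsOpen U → x ∈ U →
      ∃ F : Set α, F.Finite ∧ F.Nonempty ∧ x ∈ interior ↑(upperClosure F) ∧
        ↑(upperClosure F) ⊆ U := by
  rw [QuasicontinuousPoset, ← IsScott.topology_eq α univ]

namespace TopologicalSpace.Closeds

section Topological

variable {X ι : Type*} [TopologicalSpace X]

def selectionClosures (S : ι → Set X) : Set (Closeds X) :=
  (fun s : ι → X => Closeds.closure (range s)) '' univ.pi S

lemma mem_upperClosure_selectionClosures {S : ι → Set X} {C : Closeds X} :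
    C ∈ upperClosure (selectionClosures S) ↔ ∀ i, ((C : Set X) ∩ S i).Nonempty := by
  constructor
  · rintro ⟨_, ⟨s, hs, rfl⟩, hsC⟩ i
    exact ⟨s i, closure_le.1 hsC (mem_range_self i), hs i (mem_univ i)⟩
  · intro h
    choose s hsC hsS using h
    exact ⟨_, ⟨s, fun i _ => hsS i, rfl⟩, closure_le.2 (range_subset_iff.2 hsC)⟩

lemma finite_selectionClosures [Finite ι] {S : ι → Set X} (h : ∀ i, (S i).Finite) :
    (selectionClosures S).Finite :=
  (Finite.pi h).image _

variable [TopologicalSpace (Closeds X)] [IsScott (Closeds X) univ]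

lemma isOpen_setOf_inter_nonempty {V : Set X} (hV : IsOpen V) :
    IsOpen {C : Closeds X | ((C : Set X) ∩ V).Nonempty} := by
  refine (IsScott.isOpen_iff_isUpperSet_and_dirSupInaccOn (D := univ)).2
    ⟨fun C C' hCC' => Nonempty.mono (inter_subset_inter_left _ hCC'), ?_⟩
  rintro d - - - A hdA ⟨x, hxA, hxV⟩
  rw [← hdA.sSup_eq, coe_sSup] at hxA
  obtain ⟨y, hyV, hy⟩ := mem_closure_iff.1 hxA V hV hxV
  obtain ⟨_, ⟨C, hCd, rfl⟩, hyC⟩ := mem_sUnion.1 hy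
  exact ⟨C, hCd, y, hyC, hyV⟩

lemma exists_finite_closure_mem {𝒰 : Set (Closeds X)} (h𝒰 : IsOpen 𝒰) {A : Closeds X}
    (hA : A ∈ 𝒰) : ∃ G ⊆ (A : Set X), G.Finite ∧ Closeds.closure G ∈ 𝒰 := by
  set d := Closeds.closure '' {G | G ⊆ (A : Set X) ∧ G.Finite}
  have hdA : IsLUB d A := by
    refine ⟨?_, fun B hB x hx => ?_⟩
    · rintro _ ⟨G, ⟨hGA, -⟩, rfl⟩
      exact closure_le.2 hGA
    · exact closure_le.1 (hB ⟨{x}, ⟨singleton_subset_iff.2 hx, finite_singleton x⟩, rfl⟩) rfl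
  have hddir : DirectedOn (· ≤ ·) d := by
    refine directedOn_image.2 ?_
    rintro G ⟨hGA, hG⟩ G' ⟨hG'A, hG'⟩
    exact ⟨G ∪ G', ⟨union_subset hGA hG'A, hG.union hG'⟩,
      Closeds.gc.monotone_l subset_union_left, Closeds.gc.monotone_l subset_union_right⟩
  obtain ⟨_, ⟨G, ⟨hGA, hG⟩, rfl⟩, hG𝒰⟩ :=
    (IsScott.isOpen_iff_isUpperSet_and_dirSupInaccOn (D := univ)).1 h𝒰 |>.2 (mem_univ d)
      ⟨_, ∅, ⟨empty_subset _, finite_empty⟩, rfl⟩ hddir hdA hA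
  exact ⟨G, hGA, hG, hG𝒰⟩

end Topological

variable {P ι : Type*} [Preorder P] [TopologicalSpace P] [IsScott P univ]

lemma inter_upperClosure_nonempty_iff {C : Closeds P} {S : Set P} :
    ((C : Set P) ∩ ↑(upperClosure S)).Nonempty ↔ ((C : Set P) ∩ S).Nonempty := by
  simp only [← not_disjoint_iff_nonempty_inter,
    (IsScott.isLowerSet_of_isClosed C.isClosed).disjoint_upperClosure_right]

lemma upperClosure_selectionClosures_le {S T : ι → Set P}
    (h : ∀ i, T i ⊆ ↑(upperClosure (S i))) :
    upperClosure (selectionClosures S) ≤ upperClosure (selectionClosures T) := by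
  refine le_upperClosure.2 fun C hC => mem_upperClosure_selectionClosures.2 fun i => ?_
  have hCT := mem_upperClosure_selectionClosures.1 (subset_upperClosure hC) i
  exact inter_upperClosure_nonempty_iff.1 (hCT.mono (inter_subset_inter_right _ (h i)))

def Iic (x : P) : Closeds P := ⟨Set.Iic x, isClosed_Iic⟩

lemma scottContinuous_Iic : ScottContinuous (Iic : P → Closeds P) := by
  intro d hd hddir x hdx
  refine ⟨?_, fun C hC => ?_⟩
  · rintro _ ⟨y, hy, rfl⟩
    exact Set.Iic_subset_Iic.2 (hdx.1 hy)
  · have hdC : d ⊆ C := fun y hy => hC ⟨y, hy, rfl⟩ (le_refl y)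
    have hxC := IsScott.dirSupClosed_of_isClosed C.isClosed hdC hd hddir hdx
    exact fun y hyx => IsScott.isLowerSet_of_isClosed C.isClosed hyx hxC

variable [TopologicalSpace (Closeds P)] [IsScott (Closeds P) univ]

lemma continuous_Iic : Continuous (Iic : P → Closeds P) :=
  (IsScott.scottContinuousOn_iff_continuous fun _ _ _ => mem_univ _).1
    (scottContinuousOn_univ.2 scottContinuous_Iic)

lemma mem_interior_upperClosure_selectionClosures [Finite ι] {S : ι → Set P} {A : Closeds P}
    (h : ∀ i, ((A : Set P) ∩ interior ↑(upperClosure (S i))).Nonempty) :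
    A ∈ interior ↑(upperClosure (selectionClosures S)) := by
  refine interior_maximal (fun C hC => mem_upperClosure_selectionClosures.2 fun i => ?_)
    (isOpen_iInter_of_finite fun i => isOpen_setOf_inter_nonempty (X := P) isOpen_interior)
    (mem_iInter.2 h)
  exact inter_upperClosure_nonempty_iff.1
    ((mem_iInter.1 hC i).mono (inter_subset_inter_right _ interior_subset))

end TopologicalSpace.Closeds

section

variable {P : Type*} [Preorder P] [TopologicalSpace P] [IsScott P univ]

theorem QuasicontinuousPoset.of_closeds (h : QuasicontinuousPoset (Closeds P)) :
    QuasicontinuousPoset P := by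
  let _ : TopologicalSpace (Closeds P) := scott (Closeds P) univ
  have _ : IsScott (Closeds P) univ := ⟨rfl⟩
  rw [quasicontinuousPoset_iff (α := Closeds P)] at h
  rw [quasicontinuousPoset_iff]
  intro x U hU hxU
  obtain ⟨ℱ, hℱfin, hℱne, hxℱ, hℱU⟩ := h (Closeds.Iic x) _
    (Closeds.isOpen_setOf_inter_nonempty hU) ⟨x, le_refl x, hxU⟩
  choose f hfC hfU using fun C : ℱ => hℱU (subset_upperClosure C.2)
  have := hℱfin.to_subtype
  refine ⟨range f, finite_range f, range_nonempty_iff_nonempty.2 hℱne.to_subtype, ?_,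
    fun y ⟨_, ⟨C, rfl⟩, hy⟩ => IsScott.isUpperSet_of_isOpen (D := univ) hU hy (hfU C)⟩
  refine interior_maximal (fun y hy => ?_) (isOpen_interior.preimage Closeds.continuous_Iic) hxℱ
  obtain ⟨C, hC, hCy⟩ := interior_subset hy
  exact ⟨f ⟨C, hC⟩, mem_range_self _, hCy (hfC ⟨C, hC⟩)⟩

abbrev FiniteApproximants (G : Set P) : Type _ :=
  (g : G) → {F : Set P // F.Finite ∧ F.Nonempty ∧ (g : P) ∈ interior ↑(upperClosure F)}

namespace FiniteApproximants

variable {G : Set P}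

lemma nonempty (h : QuasicontinuousPoset P) : Nonempty (FiniteApproximants G) := by
  rw [quasicontinuousPoset_iff] at h
  choose F hF hFne hgF _ using fun g : G => h g univ isOpen_univ (mem_univ _)
  exact ⟨fun g => ⟨F g, hF g, hFne g, hgF g⟩⟩

lemma directed (h : QuasicontinuousPoset P) :
    Directed (· ≤ ·) fun t : FiniteApproximants G =>
      upperClosure (Closeds.selectionClosures fun g => (t g).1) := by
  rw [quasicontinuousPoset_iff] at h
  intro t t'
  choose F hF hFne hgF hFsub using fun g : G => h g _ (isOpen_interior.inter isOpen_interior)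
    ⟨(t g).2.2.2, (t' g).2.2.2⟩
  have hsub (g : G) : F g ⊆ interior ↑(upperClosure (t g).1) ∩
      interior ↑(upperClosure (t' g).1) := subset_upperClosure.trans (hFsub g)
  exact ⟨fun g => ⟨F g, hF g, hFne g, hgF g⟩,
    Closeds.upperClosure_selectionClosures_le fun g =>
      (hsub g).trans (inter_subset_left.trans interior_subset),
    Closeds.upperClosure_selectionClosures_le fun g =>
      (hsub g).trans (inter_subset_right.trans interior_subset)⟩

lemma subset_of_forall_mem_upperClosure (h : QuasicontinuousPoset P) {C : Closeds P}
    (hC : ∀ t : FiniteApproximants G,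
      C ∈ upperClosure (Closeds.selectionClosures fun g => (t g).1)) :
    G ⊆ C := by
  classical
  have ⟨t₀⟩ := nonempty (G := G) h
  rw [quasicontinuousPoset_iff] at h
  intro g hg
  rw [← C.isClosed.closure_eq, mem_closure_iff]
  intro V hV hgV
  obtain ⟨F, hF, hFne, hgF, hFV⟩ := h g V hV hgV
  -- replace the approximant of `g` by one inside `V`
  have hCF := Closeds.mem_upperClosure_selectionClosures.1
    (hC (Function.update t₀ ⟨g, hg⟩ ⟨F, hF, hFne, hgF⟩)) ⟨g, hg⟩
  rw [Function.update_self] at hCF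
  obtain ⟨y, hyC, hyF⟩ := hCF
  exact ⟨y, hFV (subset_upperClosure hyF), hyC⟩

end FiniteApproximants

theorem QuasicontinuousPoset.closeds (h : QuasicontinuousPoset P) :
    QuasicontinuousPoset (Closeds P) := by
  let _ : TopologicalSpace (Closeds P) := scott (Closeds P) univ
  have _ : IsScott (Closeds P) univ := ⟨rfl⟩
  rw [quasicontinuousPoset_iff (α := Closeds P)]
  intro A 𝒰 h𝒰 hA
  obtain ⟨G, hGA, hGfin, hG𝒰⟩ := Closeds.exists_finite_closure_mem h𝒰 hA
  have := hGfin.to_subtype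
  have := FiniteApproximants.nonempty (G := G) h
  have hfin (t : FiniteApproximants G) := Closeds.finite_selectionClosures fun g => (t g).2.1
  obtain ⟨t, ht𝒰⟩ := IsScott.exists_upperClosure_subset_of_iInter_subset hfin
    (FiniteApproximants.directed h) h𝒰 fun C hC => IsScott.isUpperSet_of_isOpen (D := univ) h𝒰
      (Closeds.closure_le.2 <| FiniteApproximants.subset_of_forall_mem_upperClosure h <|
        mem_iInter.1 hC) hG𝒰
  exact ⟨_, hfin t, (univ_pi_nonempty_iff.2 fun g => (t g).2.2.1).image _,
    Closeds.mem_interior_upperClosure_selectionClosures fun g => ⟨g, hGA g.2, (t g).2.2.2⟩,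
    ht𝒰⟩

end

/-- A poset `P` is quasicontinuous iff the complete lattice `Γ(P)` of Scott closed subsets of
`P` is a quasicontinuous lattice. -/
theorem quasicontinuousPoset_iff_quasicontinuous_closeds
    {P : Type*} [PartialOrder P] [TopologicalSpace P] [Topology.IsScott P Set.univ] :
    QuasicontinuousPoset P ↔ QuasicontinuousPoset (TopologicalSpace.Closeds P) :=
  ⟨QuasicontinuousPoset.closeds, QuasicontinuousPoset.of_closeds⟩
end

section
/- Let X be a consonant topological space such that for every n ∈ ℕ the Scott topology on the n-fold product of the open-set lattice O(X) coincides with the n-fold product of the Scott topology on O(X), i.e., Σ(∏^n O(X)) = ∏^n(Σ O(X)). Then the lower powerspace P_H(X), consisting of the closed subsets of X with the lower Vietoris topology, is consonant. -/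
open Topology TopologicalSpace Set

/-- A set is saturated if it is the intersection of the open sets containing it. -/
def IsSaturatedSet {X : Type*} [t : TopologicalSpace X] (K : Set X) : Prop :=
  K = ⋂₀ {U : Set X | IsOpen U ∧ K ⊆ U}

/-- A topological space `X` is consonant if for every Scott open subset `ℋ` of the open-set
lattice `O(X)` and every `U ∈ ℋ` there is a compact saturated set `K` with
`U ∈ Φ(K) ⊆ ℋ`, where `Φ(K) = {V ∈ O(X) | K ⊆ V}`. -/
def Consonant (X : Type*) [TopologicalSpace X] : Prop :=
  ∀ H : Set (TopologicalSpace.Opens X),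
    IsOpen[Topology.scott (TopologicalSpace.Opens X) Set.univ] H →
    ∀ U ∈ H, ∃ K : Set X, IsCompact K ∧ IsSaturatedSet K ∧ K ⊆ (U : Set X) ∧
      ∀ V : TopologicalSpace.Opens X, K ⊆ (V : Set X) → V ∈ H

/-- The lower Vietoris topology on the lattice of closed subsets of a topological space,
generated by the subbasis of sets `◊U = {A closed | A ∩ U ≠ ∅}` for `U` open; the resulting
space is the lower powerspace `P_H(X)`. -/
def lowerVietoris (X : Type*) [TopologicalSpace X] :
    TopologicalSpace (TopologicalSpace.Closeds X) :=
  TopologicalSpace.generateFrom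
    {S | ∃ U : Set X, IsOpen U ∧ S = {A : TopologicalSpace.Closeds X | ((A : Set X) ∩ U).Nonempty}}

/-!
Given a Scott open family `ℋ` of open subsets of `P_H(X)` and `U ∈ ℋ`, write `U` as the directed
union of the finite unions of basic open sets `⋂ⱼ ◊V_j ⊆ U`; Scott openness puts one of them,
`⋃ᵢ ⋂ⱼ ◊W_{ij}`, into `ℋ`. The map `V ↦ ⋃ᵢ ⋂ⱼ ◊V_{ij}` on a finite power of `O(X)` is Scott
continuous, so by the hypothesis on finite powers the preimage of `ℋ` is open for the product of
the Scott topologies and contains a box around `W`; consonance of `X` shrinks each side of the box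
to some `Φ(K_{ij})` with `K_{ij} ⊆ W_{ij}` compact. Then `⋃ᵢ ⋂ⱼ ◊K_{ij}` is the required compact
saturated set: `⋂ⱼ ◊K_j` is the upward closure of the image of `∏ⱼ K_j` under the continuous map
`x ↦ cl(range x)`, and, by the tube lemma, every open set containing `⋃ᵢ ⋂ⱼ ◊K_{ij}` contains
some `⋃ᵢ ⋂ⱼ ◊V_{ij}` with open `V_{ij} ⊇ K_{ij}`.
-/

section Scott

variable {α β : Type*} [Preorder α] [Preorder β]

lemma isOpen_scott_iff {s : Set α} :
    IsOpen[scott α univ] s ↔ IsUpperSet s ∧ DirSupInacc s := by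
  let := scott α univ
  have : IsScott α univ := ⟨rfl⟩
  rw [← dirSupInaccOn_univ]
  exact IsScott.isOpen_iff_isUpperSet_and_dirSupInaccOn

lemma ScottContinuous.isOpen_preimage_scott {f : α → β} (hf : ScottContinuous f) {s : Set β}
    (hs : IsOpen[scott β univ] s) : IsOpen[scott α univ] (f ⁻¹' s) := by
  let := scott α univ
  let := scott β univ
  have : IsScott α univ := ⟨rfl⟩
  have : IsScott β univ := ⟨rfl⟩
  exact ((IsScott.scottContinuousOn_iff_continuous (D := univ) (by simp)).1
    hf.scottContinuousOn).isOpen_preimage s hs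

lemma scottContinuous_comp_right {ι ι' : Type*} (g : ι → ι') :
    ScottContinuous fun w : ι' → α => w ∘ g :=
  fun _ _ _ _ ha => isLUB_pi.2 fun i => by simpa [image_image] using isLUB_pi.1 ha (g i)

lemma DirSupInacc.exists_finset_sup'_mem {γ : Type*} [SemilatticeSup γ] {s u : Set γ}
    (hu : DirSupInacc u) (hs : s.Nonempty) {a : γ} (ha : IsLUB s a) (hau : a ∈ u) :
    ∃ (t : Finset γ) (ht : t.Nonempty), ↑t ⊆ s ∧ t.sup' ht id ∈ u := by
  obtain ⟨_, ⟨t, ht, hts, rfl⟩, htu⟩ := hu (hs.mono subset_supClosure)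
    supClosed_supClosure.directedOn (isLUB_supClosure.2 ha) hau
  exact ⟨t, ht, hts, htu⟩

lemma isOpen_pi_scott_of_isOpen_scott
    (hprod : ∀ n : ℕ, scott (Fin n → α) univ =
      @Pi.topologicalSpace (Fin n) (fun _ => α) (fun _ => scott α univ))
    {ι : Type*} [Finite ι] {P : Set (ι → α)} (hP : IsOpen[scott (ι → α) univ] P) :
    IsOpen[@Pi.topologicalSpace ι (fun _ => α) (fun _ => scott α univ)] P := by
  let : TopologicalSpace α := scott α univ
  obtain ⟨n, ⟨e⟩⟩ := Finite.exists_equiv_fin ι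
  have hP' : IsOpen ((· ∘ e) ⁻¹' P) := by
    rw [← hprod n]
    exact (scottContinuous_comp_right e).isOpen_preimage_scott hP
  have hP_eq : P = (· ∘ e.symm) ⁻¹' ((· ∘ e) ⁻¹' P) := by
    ext w
    simp [Function.comp_assoc]
  rw [hP_eq]
  exact hP'.preimage (continuous_pi fun i => continuous_apply _)

end Scott

lemma Consonant.exists_isCompact_pi_forall_mem {X : Type*} [TopologicalSpace X]
    (hX : Consonant X) {ι : Type*} {P : Set (ι → Opens X)}
    (hP : IsOpen[@Pi.topologicalSpace ι (fun _ => Opens X) (fun _ => scott (Opens X) univ)] P)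
    {W : ι → Opens X} (hW : W ∈ P) :
    ∃ K : ι → Set X, (∀ k, IsCompact (K k)) ∧ (∀ k, K k ⊆ W k) ∧
      ∀ V : ι → Opens X, (∀ k, K k ⊆ V k) → V ∈ P := by
  let : TopologicalSpace (Opens X) := scott (Opens X) univ
  obtain ⟨I, u, hu, hIP⟩ := isOpen_pi_iff.1 hP W hW
  have hK : ∀ k, ∃ K : Set X, IsCompact K ∧ K ⊆ W k ∧
      (k ∈ I → ∀ V : Opens X, K ⊆ V → V ∈ u k) := by
    intro k
    by_cases hk : k ∈ I
    · obtain ⟨K, hK, -, hKW, hKu⟩ := hX (u k) (hu k hk).1 _ (hu k hk).2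
      exact ⟨K, hK, hKW, fun _ => hKu⟩
    · exact ⟨∅, isCompact_empty, empty_subset _, fun h => absurd h hk⟩
  choose K hK hKW hKu using hK
  exact ⟨K, hK, hKW, fun V hV => hIP fun k hk => hKu k hk (V k) (hV k)⟩

theorem exists_isOpen_univ_pi_subset {X : Type*} [TopologicalSpace X] :
    ∀ {n : ℕ} {K : Fin n → Set X}, (∀ j, IsCompact (K j)) → ∀ {U : Set (Fin n → X)},
      IsOpen U → univ.pi K ⊆ U →
      ∃ V : Fin n → Set X, (∀ j, IsOpen (V j)) ∧ (∀ j, K j ⊆ V j) ∧ univ.pi V ⊆ U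
  | 0, _, _, _, _, hKU =>
    ⟨fun _ => univ, fun _ => isOpen_univ, fun _ => subset_univ _,
      fun _ _ => hKU fun j => j.elim0⟩
  | n + 1, K, hK, U, hU, hKU => by
    have hcons : Continuous fun p : X × (Fin n → X) => (Fin.cons p.1 p.2 : Fin (n + 1) → X) :=
      continuous_fst.finCons (A := fun _ => X) continuous_snd
    have hsplit : K 0 ×ˢ univ.pi (fun j => K j.succ) ⊆
        (fun p : X × (Fin n → X) => (Fin.cons p.1 p.2 : Fin (n + 1) → X)) ⁻¹' U := by
      rintro ⟨a, x⟩ ⟨ha, hx⟩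
      apply hKU
      simpa [Fin.forall_fin_succ, ha] using hx
    obtain ⟨u, v, hu, hv, hKu, hKv, huv⟩ := generalized_tube_lemma (hK 0)
      (isCompact_univ_pi fun j => hK j.succ) (hU.preimage hcons) hsplit
    obtain ⟨V, hV, hKV, hVv⟩ := exists_isOpen_univ_pi_subset (fun j => hK j.succ) hv hKv
    refine ⟨Fin.cons u V, Fin.cases hu hV, Fin.cases hKu hKV, fun x hx => ?_⟩
    simp only [mem_univ_pi, Fin.forall_fin_succ, Fin.cons_zero, Fin.cons_succ] at hx
    simpa using huv (mk_mem_prod hx.1 (hVv fun j _ => hx.2 j) : (x 0, Fin.tail x) ∈ u ×ˢ v)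

attribute [local instance] lowerVietoris

namespace LowerPowerspace

variable {X : Type*} [TopologicalSpace X]

/-- The subbasic set `◊U` of the lower Vietoris topology, here for an arbitrary set `U`. -/
def diamond (U : Set X) : Set (Closeds X) := {A | ((A : Set X) ∩ U).Nonempty}

lemma isOpen_diamond {U : Set X} (hU : IsOpen U) : IsOpen (diamond U) :=
  isOpen_generateFrom_of_mem ⟨U, hU, rfl⟩

lemma diamond_mono {U V : Set X} (h : U ⊆ V) : diamond U ⊆ diamond V :=
  fun _ ⟨x, hxA, hxU⟩ => ⟨x, hxA, h hxU⟩

lemma isUpperSet_diamond (U : Set X) : IsUpperSet (diamond U) :=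
  fun _ _ hAB ⟨x, hxA, hxU⟩ => ⟨x, hAB hxA, hxU⟩

lemma isUpperSet_of_isOpen {W : Set (Closeds X)} (hW : IsOpen W) : IsUpperSet W :=
  (le_generateFrom (t := Topology.upperSet (Closeds X)) (by
    rintro _ ⟨U, -, rfl⟩
    exact isUpperSet_diamond U)) W hW

lemma specializes_iff_le {A B : Closeds X} : A ⤳ B ↔ B ≤ A := by
  refine ⟨fun h x hxB => ?_, fun h => specializes_iff_forall_open.2 fun W hW hB =>
    isUpperSet_of_isOpen hW h hB⟩
  by_contra hxA
  obtain ⟨y, hyA, hyAc⟩ := h.mem_open (isOpen_diamond A.isClosed.isOpen_compl) ⟨x, hxB, hxA⟩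
  exact hyAc hyA

lemma mem_nhdsKer_iff {S : Set (Closeds X)} {A : Closeds X} :
    A ∈ nhdsKer S ↔ ∃ B ∈ S, B ≤ A := by
  simp only [mem_nhdsKer_iff_specializes, specializes_iff_le]

lemma isSaturatedSet_of_isUpperSet {S : Set (Closeds X)} (hS : IsUpperSet S) :
    IsSaturatedSet S := by
  rw [IsSaturatedSet, ← nhdsKer_def]
  refine subset_nhdsKer.antisymm fun A hA => ?_
  obtain ⟨B, hB, hBA⟩ := mem_nhdsKer_iff.1 hA
  exact hS hBA hB

lemma continuous_closure_range {ι : Type*} :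
    Continuous fun x : ι → X => Closeds.closure (range x) := by
  refine continuous_generateFrom_iff.2 ?_
  rintro _ ⟨U, hU, rfl⟩
  have hpre : (fun x : ι → X => Closeds.closure (range x)) ⁻¹' diamond U =
      ⋃ j, (fun x : ι → X => x j) ⁻¹' U := by
    ext x
    simp only [diamond, mem_preimage, mem_ofPred_eq, Closeds.coe_closure,
      closure_inter_open_nonempty_iff hU, mem_iUnion]
    exact ⟨fun ⟨_, ⟨j, rfl⟩, hj⟩ => ⟨j, hj⟩, fun ⟨j, hj⟩ => ⟨x j, mem_range_self j, hj⟩⟩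
  exact hpre ▸ isOpen_iUnion fun j => hU.preimage (continuous_apply j)

lemma iInter_diamond_eq_nhdsKer {ι : Type*} (K : ι → Set X) :
    ⋂ j, diamond (K j) = nhdsKer ((fun x => Closeds.closure (range x)) '' univ.pi K) := by
  ext A
  simp only [mem_iInter, mem_nhdsKer_iff, exists_mem_image, Closeds.closure_le, mem_univ_pi]
  constructor
  · intro hA
    choose x hxA hxK using hA
    exact ⟨x, hxK, range_subset_iff.2 hxA⟩
  · rintro ⟨x, hxK, hxA⟩ j
    exact ⟨x j, hxA (mem_range_self j), hxK j⟩

lemma isCompact_iInter_diamond {ι : Type*} {K : ι → Set X} (hK : ∀ j, IsCompact (K j)) :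
    IsCompact (⋂ j, diamond (K j)) := by
  rw [iInter_diamond_eq_nhdsKer]
  exact ((isCompact_univ_pi hK).image continuous_closure_range).nhdsKer

lemma exists_opens_iInter_diamond_subset {n : ℕ} {K : Fin n → Set X}
    (hK : ∀ j, IsCompact (K j)) {W : Set (Closeds X)} (hW : IsOpen W)
    (hKW : ⋂ j, diamond (K j) ⊆ W) :
    ∃ V : Fin n → Opens X, (∀ j, K j ⊆ V j) ∧ ⋂ j, diamond (V j : Set X) ⊆ W := by
  rw [iInter_diamond_eq_nhdsKer] at hKW
  obtain ⟨V, hV, hKV, hVW⟩ := exists_isOpen_univ_pi_subset hK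
    (hW.preimage continuous_closure_range) (image_subset_iff.1 (subset_nhdsKer.trans hKW))
  refine ⟨fun j => ⟨V j, hV j⟩, hKV, ?_⟩
  rw [iInter_diamond_eq_nhdsKer]
  exact nhdsKer_minimal (image_subset_iff.2 hVW) hW

lemma exists_iInter_diamond_subset_of_isOpen {W : Set (Closeds X)} (hW : IsOpen W)
    {A : Closeds X} (hA : A ∈ W) :
    ∃ (n : ℕ) (V : Fin n → Opens X), A ∈ ⋂ j, diamond (V j : Set X) ∧
      ⋂ j, diamond (V j : Set X) ⊆ W := by
  obtain ⟨_, ⟨f, ⟨hf, hfg⟩, rfl⟩, hAf, hfW⟩ :=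
    (isTopologicalBasis_of_subbasis rfl).exists_subset_of_mem_open hA hW
  obtain ⟨n, e, -, rfl⟩ := hf.fin_param
  choose U hU he using fun j => hfg (mem_range_self j)
  have hfV : ⋂₀ range e = ⋂ j, diamond (U j) := by
    rw [sInter_range]
    exact iInter_congr he
  exact ⟨n, fun j => ⟨U j, hU j⟩, hfV ▸ hAf, hfV ▸ hfW⟩

section UnionInterDiamond

variable {ρ : Type*} {n : ρ → ℕ}

def unionInterDiamond (V : (Σ r, Fin (n r)) → Set X) : Set (Closeds X) :=
  ⋃ r, ⋂ j, diamond (V ⟨r, j⟩)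

lemma unionInterDiamond_mono {V V' : (Σ r, Fin (n r)) → Set X} (h : ∀ k, V k ⊆ V' k) :
    unionInterDiamond V ⊆ unionInterDiamond V' :=
  iUnion_mono fun _ => iInter_mono fun _ => diamond_mono (h _)

lemma isUpperSet_unionInterDiamond (V : (Σ r, Fin (n r)) → Set X) :
    IsUpperSet (unionInterDiamond V) :=
  isUpperSet_iUnion fun _ => isUpperSet_iInter fun _ => isUpperSet_diamond _

lemma isCompact_unionInterDiamond [Finite ρ] {K : (Σ r, Fin (n r)) → Set X}
    (hK : ∀ k, IsCompact (K k)) : IsCompact (unionInterDiamond K) :=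
  isCompact_iUnion fun _ => isCompact_iInter_diamond fun _ => hK _

lemma exists_opens_unionInterDiamond_subset {K : (Σ r, Fin (n r)) → Set X}
    (hK : ∀ k, IsCompact (K k)) {W : Set (Closeds X)} (hW : IsOpen W)
    (hKW : unionInterDiamond K ⊆ W) :
    ∃ V : (Σ r, Fin (n r)) → Opens X, (∀ k, K k ⊆ V k) ∧
      unionInterDiamond (fun k => (V k : Set X)) ⊆ W := by
  choose V hKV hVW using fun r => exists_opens_iInter_diamond_subset (fun j => hK ⟨r, j⟩) hW
    ((subset_iUnion (fun r => ⋂ j, diamond (K ⟨r, j⟩)) r).trans hKW)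
  exact ⟨fun k => V k.1 k.2, fun k => hKV k.1 k.2, iUnion_subset hVW⟩

def unionInterDiamondOpens (V : (Σ r, Fin (n r)) → Opens X) : Opens (Closeds X) :=
  ⟨unionInterDiamond fun k => V k,
    isOpen_iUnion fun _ => isOpen_iInter_of_finite fun _ => isOpen_diamond (V _).isOpen⟩

lemma scottContinuous_unionInterDiamondOpens :
    ScottContinuous (unionInterDiamondOpens (X := X) (n := n)) := by
  have hmono : Monotone (unionInterDiamondOpens (X := X) (n := n)) := fun V V' h =>
    unionInterDiamond_mono fun k => h k
  refine ScottContinuous.of_map_sSup fun d hd hdir => le_antisymm ?_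
    (sSup_le (forall_mem_image.2 fun V hV => hmono (le_sSup hV)))
  intro A hA
  obtain ⟨r, hr⟩ := mem_iUnion.1 hA
  have hmeet : ∀ j, ∃ V : d, A ∈ diamond (V.1 ⟨r, j⟩ : Set X) := by
    intro j
    have hj : ((A : Set X) ∩ (sSup d ⟨r, j⟩ : Opens X)).Nonempty := mem_iInter.1 hr j
    rw [sSup_apply, Opens.coe_iSup, inter_iUnion] at hj
    exact nonempty_iUnion.1 hj
  choose V hV using hmeet
  have : Nonempty d := hd.to_subtype
  obtain ⟨Z, hZ⟩ := (directedOn_iff_directed.1 hdir).finite_le V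
  have hAZ : A ∈ unionInterDiamondOpens Z.1 :=
    mem_iUnion.2 ⟨r, mem_iInter.2 fun j => diamond_mono (hZ j ⟨r, j⟩) (hV j)⟩
  exact le_sSup (mem_image_of_mem unionInterDiamondOpens Z.2) hAZ

lemma exists_unionInterDiamondOpens_mem {ℋ : Set (Opens (Closeds X))}
    (hℋ : IsOpen[scott _ univ] ℋ) {U : Opens (Closeds X)} (hU : U ∈ ℋ) :
    ∃ (t : Finset (Opens (Closeds X))) (n : t → ℕ) (W : (Σ B : t, Fin (n B)) → Opens X),
      unionInterDiamondOpens W ∈ ℋ ∧ unionInterDiamondOpens W ≤ U := by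
  rw [isOpen_scott_iff] at hℋ
  set 𝔅 : Set (Opens (Closeds X)) := {B | B ≤ U ∧
    ∃ (n : ℕ) (V : Fin n → Opens X), (B : Set (Closeds X)) = ⋂ j, diamond (V j : Set X)}
  have h𝔅 : 𝔅.Nonempty := ⟨⊥, bot_le, 1, fun _ => ⊥, by ext; simp [diamond]⟩
  have hU𝔅 : IsLUB 𝔅 U := by
    refine ⟨fun B hB => hB.1, fun B hB A hA => ?_⟩
    obtain ⟨n, V, hAV, hVU⟩ := exists_iInter_diamond_subset_of_isOpen U.isOpen hA
    exact hB (show ⟨_, isOpen_iInter_of_finite fun j => isOpen_diamond (V j).isOpen⟩ ∈ 𝔅 from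
      ⟨hVU, n, V, rfl⟩) hAV
  obtain ⟨t, ht, ht𝔅, htℋ⟩ := hℋ.2.exists_finset_sup'_mem h𝔅 hU𝔅 hU
  choose n V hV using fun B : t => (ht𝔅 B.2).2
  refine ⟨t, n, fun k => V k.1 k.2, hℋ.1 (Finset.sup'_le _ _ fun B hB => ?_) htℋ, ?_⟩
  · show (B : Set (Closeds X)) ⊆ ⋃ r : t, ⋂ j, diamond (V r j : Set X)
    exact hV ⟨B, hB⟩ ▸ subset_iUnion (fun r : t => ⋂ j, diamond (V r j : Set X)) ⟨B, hB⟩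
  · show ⋃ r : t, ⋂ j, diamond (V r j : Set X) ⊆ U
    exact iUnion_subset fun B => hV B ▸ (ht𝔅 B.2).1

end UnionInterDiamond

end LowerPowerspace

open LowerPowerspace in
/-- Let `X` be a consonant space such that for every `n` the Scott topology on the `n`-fold
product of the lattice `O(X)` coincides with the `n`-fold product of the Scott topology on
`O(X)`. Then the lower powerspace `P_H(X)` is consonant. -/
theorem consonant_lowerPowerspace_of_consonant_of_scott_prod
    {X : Type*} [TopologicalSpace X] (hX : Consonant X)
    (hprod : ∀ n : ℕ,
      Topology.scott (Fin n → TopologicalSpace.Opens X) Set.univ =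
        @Pi.topologicalSpace (Fin n) (fun _ => TopologicalSpace.Opens X)
          (fun _ => Topology.scott (TopologicalSpace.Opens X) Set.univ)) :
    @Consonant (TopologicalSpace.Closeds X) (lowerVietoris X) := by
  intro ℋ hℋ U hU
  obtain ⟨t, n, W, hWℋ, hWU⟩ := exists_unionInterDiamondOpens_mem hℋ hU
  have hP := isOpen_pi_scott_of_isOpen_scott hprod
    ((scottContinuous_unionInterDiamondOpens (n := n)).isOpen_preimage_scott hℋ)
  obtain ⟨K, hK, hKW, hKℋ⟩ := hX.exists_isCompact_pi_forall_mem hP hWℋ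
  refine ⟨unionInterDiamond K, isCompact_unionInterDiamond hK,
    isSaturatedSet_of_isUpperSet (isUpperSet_unionInterDiamond K),
    (unionInterDiamond_mono hKW).trans hWU, fun O hKO => ?_⟩
  obtain ⟨V, hKV, hVO⟩ := exists_opens_unionInterDiamond_subset hK O.isOpen hKO
  exact (isOpen_scott_iff.1 hℋ).1 (show unionInterDiamondOpens V ≤ O from hVO) (hKℋ V hKV)
end

section
/- A topological space X is locally compact if and only if X is core-compact and consonant. -/
open Topology TopologicalSpace Set

/-- `x` is way-below `y`: for every directed set `d` having a least upper bound `a`,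
if `y ≤ a` then some element of `d` dominates `x`. -/
def WayBelow {α : Type*} [Preorder α] (x y : α) : Prop :=
  ∀ d : Set α, d.Nonempty → DirectedOn (· ≤ ·) d → ∀ a : α, IsLUB d a → y ≤ a → ∃ z ∈ d, x ≤ z

/-- A poset is continuous if for every `x` the set of elements way-below `x` is directed
(in particular nonempty) with least upper bound `x`. -/
def ContinuousPoset (α : Type*) [Preorder α] : Prop :=
  ∀ x : α, {d : α | WayBelow d x}.Nonempty ∧ DirectedOn (· ≤ ·) {d : α | WayBelow d x} ∧
    IsLUB {d : α | WayBelow d x} x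

/-- A topological space is core-compact if its lattice of open subsets is a continuous
lattice. -/
def CoreCompact (X : Type*) [TopologicalSpace X] : Prop :=
  ContinuousPoset (TopologicalSpace.Opens X)

/- ### Auxiliary lemmas -/

theorem WayBelow.le {α : Type*} [Preorder α] {x y : α} (h : WayBelow x y) : x ≤ y := by
  obtain ⟨z, hz, hxz⟩ := h {y} ⟨y, rfl⟩
    (fun a ha b hb => ⟨y, rfl, ha ▸ le_refl _, hb ▸ le_refl _⟩) y isLUB_singleton le_rfl
  rw [Set.mem_singleton_iff] at hz
  exact hz ▸ hxz

theorem WayBelow.mono_left {α : Type*} [Preorder α] {x x' y : α} (hx : x' ≤ x)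
    (h : WayBelow x y) : WayBelow x' y := fun d hd hdir a ha hya =>
  let ⟨z, hz, hxz⟩ := h d hd hdir a ha hya
  ⟨z, hz, hx.trans hxz⟩

theorem WayBelow.mono_right {α : Type*} [Preorder α] {x y y' : α} (hy : y ≤ y')
    (h : WayBelow x y) : WayBelow x y' := fun d hd hdir a ha hya =>
  h d hd hdir a ha (hy.trans hya)

/-- Interpolation property in a continuous poset. -/
theorem ContinuousPoset.interpolate {α : Type*} [Preorder α] (hc : ContinuousPoset α)
    {x y : α} (h : WayBelow x y) : ∃ w, WayBelow x w ∧ WayBelow w y := by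
  classical
  set d : Set α := ⋃ w ∈ {w | WayBelow w y}, {z | WayBelow z w} with hd
  obtain ⟨⟨w₀, hw₀⟩, hdiry, hlub⟩ := hc y
  have hmem : ∀ z, z ∈ d ↔ ∃ w, WayBelow w y ∧ WayBelow z w := by
    intro z; simp [hd]
  -- d is nonempty
  obtain ⟨⟨z₀, hz₀⟩, _, _⟩ := hc w₀
  have hdne : d.Nonempty := ⟨z₀, (hmem z₀).2 ⟨w₀, hw₀, hz₀⟩⟩
  -- d is directed
  have hdir : DirectedOn (· ≤ ·) d := by
    intro z₁ h₁ z₂ h₂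
    obtain ⟨w₁, hw₁, hz₁⟩ := (hmem z₁).1 h₁
    obtain ⟨w₂, hw₂, hz₂⟩ := (hmem z₂).1 h₂
    obtain ⟨w, hw, hw₁w, hw₂w⟩ := hdiry w₁ hw₁ w₂ hw₂
    obtain ⟨_, hdirw, hlubw⟩ := hc w
    obtain ⟨z, hz, hz₁z, hz₂z⟩ := hdirw z₁ (hz₁.mono_right hw₁w) z₂ (hz₂.mono_right hw₂w)
    exact ⟨z, (hmem z).2 ⟨w, hw, hz⟩, hz₁z, hz₂z⟩
  -- y is the LUB of d
  have hlubd : IsLUB d y := by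
    constructor
    · intro z hz
      obtain ⟨w, hw, hzw⟩ := (hmem z).1 hz
      exact hzw.le.trans hw.le
    · intro b hb
      apply hlub.2
      intro w hw
      obtain ⟨_, _, hlubw⟩ := hc w
      apply hlubw.2
      intro z hz
      exact hb ((hmem z).2 ⟨w, hw, hz⟩)
  obtain ⟨z, hz, hxz⟩ := h d hdne hdir y hlubd le_rfl
  obtain ⟨w, hw, hzw⟩ := (hmem z).1 hz
  exact ⟨w, hzw.mono_left hxz, hw⟩

/-- In `Opens X`, the supremum of a set with a least upper bound is the union. -/
theorem isLUB_opens_coe {X : Type*} [TopologicalSpace X] {S : Set (Opens X)} {U : Opens X}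
    (h : IsLUB S U) : (U : Set X) = ⋃ V ∈ S, (V : Set X) := by
  have : sSup S = U := h.sSup_eq
  rw [← this, Opens.coe_sSup]

/-- In a locally compact space, the interior of a compact neighbourhood inside `U` is
way-below `U`. -/
theorem wayBelow_of_compact_between {X : Type*} [TopologicalSpace X] {V U : Opens X}
    {K : Set X} (hK : IsCompact K) (hVK : (V : Set X) ⊆ K) (hKU : K ⊆ (U : Set X)) :
    WayBelow V U := by
  intro d hdne hdir a ha hUa
  have hcov : K ⊆ ⋃ z : d, ((z : Opens X) : Set X) := by
    have : (a : Set X) = ⋃ z ∈ d, ((z : Opens X) : Set X) := isLUB_opens_coe ha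
    intro x hx
    have hxa : x ∈ (a : Set X) := hUa (hKU hx)
    rw [this] at hxa
    simpa using hxa
  haveI : Nonempty d := hdne.to_subtype
  have hdir' : Directed (· ⊆ ·) (fun z : d => ((z : Opens X) : Set X)) := by
    rintro ⟨z₁, hz₁⟩ ⟨z₂, hz₂⟩
    obtain ⟨z, hz, h₁, h₂⟩ := hdir z₁ hz₁ z₂ hz₂
    exact ⟨⟨z, hz⟩, SetLike.coe_subset_coe.2 h₁, SetLike.coe_subset_coe.2 h₂⟩
  obtain ⟨⟨z, hz⟩, hKz⟩ := hK.elim_directed_cover (fun z : d => ((z : Opens X) : Set X))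
    (fun z => (z : Opens X).2) hcov hdir'
  exact ⟨z, hz, fun x hx => hKz (hVK hx)⟩

theorem scott_open_iff {X : Type*} [TopologicalSpace X] (H : Set (Opens X)) :
    IsOpen[Topology.scott (Opens X) Set.univ] H ↔ IsUpperSet H ∧ DirSupInacc H := by
  letI t := Topology.scott (Opens X) (Set.univ : Set (Set (Opens X)))
  haveI : Topology.IsScott (Opens X) Set.univ := ⟨rfl⟩
  rw [show IsOpen[Topology.scott (Opens X) Set.univ] H ↔ IsOpen H from Iff.rfl,
    Topology.IsScott.isOpen_iff_isUpperSet_and_dirSupInaccOn (D := (Set.univ : Set (Set (Opens X)))),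
    dirSupInaccOn_univ]

/-- A topological space is locally compact iff it is core-compact and consonant. -/
theorem locallyCompact_iff_coreCompact_and_consonant
    {X : Type*} [TopologicalSpace X] :
    LocallyCompactSpace X ↔ CoreCompact X ∧ Consonant X := by
  constructor
  · intro hlc
    constructor
    · -- Core-compact
      intro U
      refine ⟨⟨⊥, fun d hdne _ a _ _ => hdne.imp fun z hz => ⟨hz, bot_le⟩⟩, ?_, ?_⟩
      · intro V₁ h₁ V₂ h₂
        refine ⟨V₁ ⊔ V₂, ?_, le_sup_left, le_sup_right⟩
        intro d hdne hdir a ha hUa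
        obtain ⟨z₁, hz₁, hV₁⟩ := h₁ d hdne hdir a ha hUa
        obtain ⟨z₂, hz₂, hV₂⟩ := h₂ d hdne hdir a ha hUa
        obtain ⟨z, hz, h₁z, h₂z⟩ := hdir z₁ hz₁ z₂ hz₂
        exact ⟨z, hz, sup_le (hV₁.trans h₁z) (hV₂.trans h₂z)⟩
      · constructor
        · intro V hV; exact hV.le
        · intro b hb
          intro x hx
          obtain ⟨K, hKn, hKU, hKc⟩ := hlc.local_compact_nhds x (U : Set X)
            (U.2.mem_nhds hx)
          set V : Opens X := ⟨interior K, isOpen_interior⟩ with hV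
          have hVwb : WayBelow V U :=
            wayBelow_of_compact_between hKc interior_subset hKU
          have : V ≤ b := hb hVwb
          exact this (mem_interior_iff_mem_nhds.2 hKn)
    · -- Consonant
      intro H hHopen U hU
      obtain ⟨hupper, hinacc⟩ := (scott_open_iff H).1 hHopen
      set S : Set (Opens X) := {V | ∃ K : Set X, IsCompact K ∧ (V : Set X) ⊆ K ∧ K ⊆ (U : Set X)}
        with hS
      have hSne : S.Nonempty := ⟨⊥, ∅, isCompact_empty, by simp, empty_subset _⟩
      have hSdir : DirectedOn (· ≤ ·) S := by
        rintro V₁ ⟨K₁, hK₁, h₁, h₁U⟩ V₂ ⟨K₂, hK₂, h₂, h₂U⟩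
        exact ⟨V₁ ⊔ V₂, ⟨K₁ ∪ K₂, hK₁.union hK₂,
          by rw [Opens.coe_sup]; exact union_subset_union h₁ h₂,
          union_subset h₁U h₂U⟩, le_sup_left, le_sup_right⟩
      have hSlub : IsLUB S U := by
        constructor
        · rintro V ⟨K, _, hVK, hKU⟩
          exact fun x hx => hKU (hVK hx)
        · intro b hb x hx
          obtain ⟨K, hKn, hKU, hKc⟩ := hlc.local_compact_nhds x (U : Set X)
            (U.2.mem_nhds hx)
          have : (⟨interior K, isOpen_interior⟩ : Opens X) ∈ S :=
            ⟨K, hKc, interior_subset, hKU⟩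
          exact hb this (mem_interior_iff_mem_nhds.2 hKn)
      obtain ⟨V, hVS, hVH⟩ := hinacc hSne hSdir hSlub hU
      obtain ⟨K, hKc, hVK, hKU⟩ := hVS
      -- pass to the saturation of K
      set K' : Set X := ⋂₀ {W : Set X | IsOpen W ∧ K ⊆ W} with hK'
      have hKK' : K ⊆ K' := fun x hx => by
        intro W hW; exact hW.2 hx
      have hK'sub : ∀ W : Set X, IsOpen W → K ⊆ W → K' ⊆ W := fun W hWo hKW =>
        sInter_subset_of_mem ⟨hWo, hKW⟩
      refine ⟨K', ?_, ?_, hK'sub _ U.2 hKU, ?_⟩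
      · -- compact
        rw [isCompact_iff_finite_subcover]
        intro ι Us hUso hcov
        obtain ⟨t, ht⟩ := (isCompact_iff_finite_subcover.1 hKc) Us hUso (hKK'.trans hcov)
        exact ⟨t, hK'sub _ (isOpen_biUnion fun i _ => hUso i) ht⟩
      · -- saturated
        have : {W : Set X | IsOpen W ∧ K' ⊆ W} = {W : Set X | IsOpen W ∧ K ⊆ W} := by
          ext W
          exact ⟨fun ⟨hWo, hW⟩ => ⟨hWo, hKK'.trans hW⟩,
            fun ⟨hWo, hW⟩ => ⟨hWo, hK'sub _ hWo hW⟩⟩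
        rw [IsSaturatedSet, this]
      · intro W hW
        exact hupper (show V ≤ W from fun x hx => hW (hKK' (hVK hx))) hVH
  · rintro ⟨hcc, hcons⟩
    constructor
    intro x n hn
    obtain ⟨u, hun, huo, hxu⟩ := mem_nhds_iff.1 hn
    set U : Opens X := ⟨u, huo⟩ with hU
    obtain ⟨_, _, hlub⟩ := hcc U
    have hx' : x ∈ ⋃ V ∈ {V : Opens X | WayBelow V U}, (V : Set X) := by
      rw [← isLUB_opens_coe hlub]; exact hxu
    simp only [mem_iUnion, mem_setOf_eq] at hx'
    obtain ⟨V, hVU, hxV⟩ := hx'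
    -- H = opens way-above V is Scott open
    set H : Set (Opens X) := {W | WayBelow V W} with hH
    have hHopen : IsOpen[Topology.scott (Opens X) Set.univ] H := by
      rw [scott_open_iff]
      constructor
      · intro W₁ W₂ h hW₁
        exact fun d hdne hdir a ha h₂a => hW₁ d hdne hdir a ha (h.trans h₂a)
      · intro d hdne hdir a ha haH
        obtain ⟨W, hVW, hWa⟩ := hcc.interpolate haH
        obtain ⟨z, hz, hWz⟩ := hWa d hdne hdir a ha le_rfl
        exact ⟨z, hz, hVW.mono_right hWz⟩
    obtain ⟨K, hKc, hKsat, hKU, hKH⟩ := hcons H hHopen U hVU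
    refine ⟨K, ?_, hKU.trans hun, hKc⟩
    -- V ⊆ K, so K is a neighbourhood of x
    have hVK : (V : Set X) ⊆ K := by
      intro y hy
      rw [hKsat]
      rintro W ⟨hWo, hKW⟩
      have : (⟨W, hWo⟩ : Opens X) ∈ H := hKH ⟨W, hWo⟩ hKW
      exact (WayBelow.le this : V ≤ ⟨W, hWo⟩) hy
    exact Filter.mem_of_superset (V.2.mem_nhds hxV) hVK
end
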